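/- Let F be a functor from rings to a category 𝔇 and let A be a ring. Assume F is M₂-stable on both A and M₂A. Then the two corner inclusions ι₀, ι₁ : A → M₂A, ι₀(a) = a·e₁₁ and ι₁(a) = a·e₂₂, induce the same isomorphism F(A) → F(M₂A). -/

import Mathlib

/-!
Statement 0.  Let `F` be a functor from rings to a category `𝔇` and let `A` be
a ring.  Assume `F` is `M₂`-stable on both `A` and `M₂A` (i.e. `F` sends the
corner inclusion `ι₀ : B → M₂B`, `b ↦ b·e₁₁`, to an isomorphism for `B = A`
and `B = M₂A`).  Then the two corner inclusions `ι₀, ι₁ : A → M₂A`,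
`ι₀(a) = a·e₁₁` and `ι₁(a) = a·e₂₂`, induce the same isomorphism
`F(A) → F(M₂A)`.

Here "rings" means not necessarily unital rings with (not necessarily unital)
ring homomorphisms.
-/

set_option autoImplicit false
noncomputable section

open CategoryTheory

/-- `M₂A`: the ring of 2×2 matrices over `A`. -/
abbrev M2 (A : Type) [NonUnitalRing A] : Type := Matrix (Fin 2) (Fin 2) A

/-- The corner inclusion `ι₀ : A → M₂A`, `a ↦ a·e₁₁`. -/
def iota0 (A : Type) [NonUnitalRing A] : A →ₙ+* M2 A where
  toFun a := Matrix.single 0 0 a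
  map_mul' := by
    intro a b
    simpa using (Matrix.single_mul_single_same (i := (0 : Fin 2)) (j := 0) (k := (0 : Fin 2)) (c := a) (d := b)).symm
  map_zero' := by simp
  map_add' := by intro a b; ext i j; simp [Matrix.single]; aesop

/-- The corner inclusion `ι₁ : A → M₂A`, `a ↦ a·e₂₂`. -/
def iota1 (A : Type) [NonUnitalRing A] : A →ₙ+* M2 A where
  toFun a := Matrix.single 1 1 a
  map_mul' := by
    intro a b
    simpa using (Matrix.single_mul_single_same (i := (1 : Fin 2)) (j := 1) (k := (1 : Fin 2)) (c := a) (d := b)).symm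
  map_zero' := by simp
  map_add' := by intro a b; ext i j; simp [Matrix.single]; aesop

/-- A functor from the category of (not necessarily unital) rings to a
category `𝔇`. -/
structure RingFunctor (D : Type*) [Category D] where
  obj : (A : Type) → [NonUnitalRing A] → D
  map : {A B : Type} → [NonUnitalRing A] → [NonUnitalRing B] →
    (A →ₙ+* B) → (obj A ⟶ obj B)
  map_id : ∀ (A : Type) [NonUnitalRing A],
    map (NonUnitalRingHom.id A) = 𝟙 (obj A)
  map_comp : ∀ {A B C : Type} [NonUnitalRing A] [NonUnitalRing B]
    [NonUnitalRing C] (f : A →ₙ+* B) (g : B →ₙ+* C),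
    map (g.comp f) = map f ≫ map g

/-- `F` is `M₂`-stable on `A` if it sends the corner inclusion
`ι₀ : A → M₂A` to an isomorphism. -/
def RingFunctor.M2Stable {D : Type*} [Category D] (F : RingFunctor D)
    (A : Type) [NonUnitalRing A] : Prop :=
  IsIso (F.map (iota0 A))

/-
Flatten `M₂(M₂A)` to matrices indexed by `Fin 2 × Fin 2`; stability on `M₂A` makes the
flattened corner embedding `J : M₂A → M₄A` an `F`-isomorphism. The transposition of `(1, 0)` and
`(1, 1)` fixes the image of `J`, so it acts trivially on `F(M₄A)`; all transpositions being
conjugate, the whole symmetric group acts trivially. The swap of the inner index restricts along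
`J` to the swap `s` of rows and columns of `M₂A`, hence `F(s) = 1`, and `ι₁ = s ∘ ι₀`.
-/

theorem Equiv.Perm.eq_top_of_normal_of_swap_mem {α : Type*} [Finite α] [DecidableEq α]
    (N : Subgroup (Equiv.Perm α)) [N.Normal] {a b : α} (hab : a ≠ b)
    (h : Equiv.swap a b ∈ N) : N = ⊤ := by
  refine top_unique ?_
  rw [← Equiv.Perm.closure_isSwap, Subgroup.closure_le]
  rintro _ ⟨x, y, hxy, rfl⟩
  obtain ⟨c, hc⟩ := isConj_iff.1 (Equiv.Perm.isConj_swap hab hxy)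
  rw [← hc]
  exact Subgroup.Normal.conj_mem ‹_› _ h c

namespace RingFunctor

variable {D : Type*} [Category D] (F : RingFunctor D)

section

variable {A B : Type} [NonUnitalRing A] [NonUnitalRing B]

instance isIso_map_ringEquiv (e : A ≃+* B) : IsIso (F.map e.toNonUnitalRingHom) :=
  ⟨F.map e.symm.toNonUnitalRingHom,
    by rw [← F.map_comp, e.symm_toNonUnitalRingHom_comp_toNonUnitalRingHom, F.map_id],
    by rw [← F.map_comp, e.toNonUnitalRingHomm_comp_symm_toNonUnitalRingHom, F.map_id]⟩

theorem map_eq_id_of_comp_eq_self (j : A →ₙ+* B) [Epi (F.map j)] (g : B →ₙ+* B)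
    (h : g.comp j = j) : F.map g = 𝟙 _ := by
  rw [← cancel_epi (F.map j), ← F.map_comp, h, Category.comp_id]

theorem map_eq_id_of_comp_eq_comp (j : A →ₙ+* B) [Mono (F.map j)] {g : A →ₙ+* A}
    {g' : B →ₙ+* B} (h : j.comp g = g'.comp j) (hg' : F.map g' = 𝟙 _) : F.map g = 𝟙 _ := by
  rw [← cancel_mono (F.map j), ← F.map_comp, h, F.map_comp, hg', Category.comp_id,
    Category.id_comp]

end

variable (n : Type) [Fintype n] [DecidableEq n] (A : Type) [NonUnitalRing A]

def reindexAction : Equiv.Perm n →* End (F.obj (Matrix n n A)) where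
  toFun σ := F.map (Matrix.reindexRingEquiv A σ).toNonUnitalRingHom
  map_one' := F.map_id _
  map_mul' σ τ := F.map_comp (Matrix.reindexRingEquiv A τ).toNonUnitalRingHom
    (Matrix.reindexRingEquiv A σ).toNonUnitalRingHom

variable {n}

theorem map_reindex_eq_id_of_swap {a b : n} (hab : a ≠ b)
    (h : F.map (Matrix.reindexRingEquiv A (Equiv.swap a b)).toNonUnitalRingHom = 𝟙 _)
    (σ : Equiv.Perm n) : F.map (Matrix.reindexRingEquiv A σ).toNonUnitalRingHom = 𝟙 _ := by
  have hker : (F.reindexAction n A).ker = ⊤ :=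
    Equiv.Perm.eq_top_of_normal_of_swap_mem _ hab (MonoidHom.mem_ker.2 h)
  exact MonoidHom.mem_ker.1 (hker ▸ Subgroup.mem_top σ)

end RingFunctor

section CornerBlock

variable (A : Type) [NonUnitalRing A]

@[simp]
theorem iota0_apply (a : A) : iota0 A a = Matrix.single 0 0 a := rfl

@[simp]
theorem iota1_apply (a : A) : iota1 A a = Matrix.single 1 1 a := rfl

def iota0Block : M2 A →ₙ+* Matrix (Fin 2 × Fin 2) (Fin 2 × Fin 2) A :=
  (Matrix.compRingEquiv (Fin 2) (Fin 2) A).toNonUnitalRingHom.comp (iota0 (M2 A))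

variable {A}

theorem iota0Block_apply (M : M2 A) (p q : Fin 2 × Fin 2) :
    iota0Block A M p q = if p.1 = 0 ∧ q.1 = 0 then M p.2 q.2 else 0 := by
  simp only [iota0Block, NonUnitalRingHom.comp_apply, iota0_apply,
    RingEquiv.coe_toNonUnitalRingHom', Matrix.compRingEquiv_apply, Matrix.comp_apply,
    Matrix.single_apply, eq_comm (a := (0 : Fin 2))]
  split_ifs <;> rfl

theorem reindex_comp_iota0Block {σ : Equiv.Perm (Fin 2 × Fin 2)}
    (hσ : ∀ p : Fin 2 × Fin 2, p.1 = 0 → σ p = p) :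
    (Matrix.reindexRingEquiv A σ).toNonUnitalRingHom.comp (iota0Block A) = iota0Block A := by
  have hfix (p : Fin 2 × Fin 2) (hp : p.1 = 0) : σ.symm p = p :=
    σ.symm_apply_eq.2 (hσ p hp).symm
  have hmoved (p : Fin 2 × Fin 2) (hp : p.1 ≠ 0) : (σ.symm p).1 ≠ 0 := fun h0 =>
    hp (by rwa [← σ.apply_symm_apply p, hσ _ h0])
  ext M p q
  simp only [NonUnitalRingHom.comp_apply, RingEquiv.coe_toNonUnitalRingHom',
    Matrix.coe_reindexRingEquiv, Matrix.reindex_apply, Matrix.submatrix_apply, iota0Block_apply]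
  by_cases hp : p.1 = 0
  · by_cases hq : q.1 = 0
    · rw [hfix p hp, hfix q hq]
    · simp [hq, hmoved q hq]
  · simp [hp, hmoved p hp]

theorem reindex_prodCongr_comp_iota0Block (σ : Equiv.Perm (Fin 2)) :
    (Matrix.reindexRingEquiv A ((Equiv.refl _).prodCongr σ)).toNonUnitalRingHom.comp
        (iota0Block A) =
      (iota0Block A).comp (Matrix.reindexRingEquiv A σ).toNonUnitalRingHom := by
  ext M ⟨i, k⟩ ⟨j, l⟩
  simp [iota0Block_apply]

theorem iota1_eq_reindex_swap_comp_iota0 :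
    iota1 A = (Matrix.reindexRingEquiv A (Equiv.swap 0 1)).toNonUnitalRingHom.comp (iota0 A) := by
  ext a i j
  fin_cases i <;> fin_cases j <;> simp

end CornerBlock

theorem RingFunctor.map_reindex_eq_id_of_M2Stable {D : Type*} [Category D] (F : RingFunctor D)
    {A : Type} [NonUnitalRing A] (h : F.M2Stable (M2 A)) (σ : Equiv.Perm (Fin 2)) :
    F.map (Matrix.reindexRingEquiv A σ).toNonUnitalRingHom = 𝟙 _ := by
  have : IsIso (F.map (iota0 (M2 A))) := h
  have : IsIso (F.map (iota0Block A)) := by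
    rw [iota0Block, F.map_comp]
    infer_instance
  have hswap : F.map (Matrix.reindexRingEquiv A
      (Equiv.swap ((1 : Fin 2), (0 : Fin 2)) (1, 1))).toNonUnitalRingHom = 𝟙 _ :=
    F.map_eq_id_of_comp_eq_self _ _ <| reindex_comp_iota0Block fun p hp => by
      rw [Equiv.swap_apply_of_ne_of_ne] <;> simp [Prod.ext_iff, hp]
  exact F.map_eq_id_of_comp_eq_comp (iota0Block A)
    (reindex_prodCongr_comp_iota0Block σ).symm
    (F.map_reindex_eq_id_of_swap A (by decide) hswap _)

theorem corner_inclusions_induce_same_isomorphism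
    {D : Type*} [Category D] (F : RingFunctor D)
    (A : Type) [NonUnitalRing A]
    (h₁ : F.M2Stable A) (h₂ : F.M2Stable (M2 A)) :
    F.map (iota1 A) = F.map (iota0 A) ∧ IsIso (F.map (iota0 A)) := by
  refine ⟨?_, h₁⟩
  rw [iota1_eq_reindex_swap_comp_iota0, F.map_comp, F.map_reindex_eq_id_of_M2Stable h₂,
    Category.comp_id]
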